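/- Measurement-outcome independence of extremal swap fidelities: for any Bell outcome (i,j) and any ρ₁ ∈ S_{p₁,F₁}, ρ₂ ∈ S_{p₂,F₂}, there exist ω₁ ∈ S_{p₁,F₁}, ω₂ ∈ S_{p₂,F₂} with F'_ij(ρ₁⊗ρ₂) = F'₀₀(ω₁⊗ω₂); consequently max and min of F'_ij over these sets are independent of (i,j). Explicitly one may take ω₁ = ρ₁ and ω₂ = (Z^jX^i ⊗ Z^jX^i) ρ₂ (X^iZ^j ⊗ X^iZ^j). -/

import Mathlib

open Matrix Kronecker BigOperators ComplexOrder

noncomputable section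

/-- Pauli X matrix. -/
def PX : Matrix (Fin 2) (Fin 2) ℂ := !![0, 1; 1, 0]

/-- Pauli Y matrix. -/
def PY : Matrix (Fin 2) (Fin 2) ℂ := !![0, -Complex.I; Complex.I, 0]

/-- Pauli Z matrix. -/
def PZ : Matrix (Fin 2) (Fin 2) ℂ := !![1, 0; 0, -1]

/-- The maximally entangled two-qubit state (|00⟩+|11⟩)/√2, as a vector. -/
def bell00 : Fin 2 × Fin 2 → ℂ := fun p => if p.1 = p.2 then ((1 / Real.sqrt 2 : ℝ) : ℂ) else 0

/-- The Bell basis vector |Ψ_ij⟩ = (I ⊗ X^i Z^j)|Ψ₀₀⟩. -/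
def bell (i j : Fin 2) : Fin 2 × Fin 2 → ℂ :=
  (((1 : Matrix (Fin 2) (Fin 2) ℂ) ⊗ₖ (PX ^ (i : ℕ) * PZ ^ (j : ℕ)))).mulVec bell00

/-- The inner product ⟨φ|M|ψ⟩. -/
def braket2 {n : Type*} [Fintype n] (φ : n → ℂ) (M : Matrix n n ℂ) (ψ : n → ℂ) : ℂ :=
  star φ ⬝ᵥ M.mulVec ψ

/-- A density matrix: positive semidefinite with unit trace. -/
def IsDensity {n : Type*} [Fintype n] (ρ : Matrix n n ℂ) : Prop :=
  ρ.PosSemidef ∧ ρ.trace = 1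

/-- The Bell-diagonal twirl B(ρ). -/
def twirl (ρ : Matrix (Fin 2 × Fin 2) (Fin 2 × Fin 2) ℂ) :
    Matrix (Fin 2 × Fin 2) (Fin 2 × Fin 2) ℂ :=
  (1 / 4 : ℂ) • (ρ + (PX ⊗ₖ PX) * ρ * (PX ⊗ₖ PX)ᴴ + (PY ⊗ₖ PY) * ρ * (PY ⊗ₖ PY)ᴴ
    + (PZ ⊗ₖ PZ) * ρ * (PZ ⊗ₖ PZ)ᴴ)

/-- The Bell projector |Ψ_ij⟩⟨Ψ_ij|. -/
def bproj (i j : Fin 2) : Matrix (Fin 2 × Fin 2) (Fin 2 × Fin 2) ℂ :=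
  vecMulVec (bell i j) (star (bell i j))

/-- Partial inner product ⟨ψ|_{A₁A₂} M |ψ⟩_{A₁A₂} of a vector ψ on the middle registers
A₁,A₂ with an operator M on registers (B₁,A₁),(A₂,B₂), giving a matrix on B₁,B₂. -/
def swapProj (ψ : Fin 2 × Fin 2 → ℂ)
    (M : Matrix ((Fin 2 × Fin 2) × (Fin 2 × Fin 2)) ((Fin 2 × Fin 2) × (Fin 2 × Fin 2)) ℂ) :
    Matrix (Fin 2 × Fin 2) (Fin 2 × Fin 2) ℂ :=
  fun p q => ∑ a₁, ∑ a₂, ∑ a₁', ∑ a₂',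
    star (ψ (a₁, a₂)) * M ((p.1, a₁), (a₂, p.2)) ((q.1, a₁'), (a₂', q.2)) * ψ (a₁', a₂')

/-- The probability of Bell-measurement outcome ij on the middle registers:
p'_ij(M) = Tr[|Ψ_ij⟩⟨Ψ_ij|_{A₁A₂} M]. -/
def swapProb (i j : Fin 2)
    (M : Matrix ((Fin 2 × Fin 2) × (Fin 2 × Fin 2)) ((Fin 2 × Fin 2) × (Fin 2 × Fin 2)) ℂ) : ℂ :=
  (swapProj (bell i j) M).trace

/-- Tr[|Ψ_ij⟩⟨Ψ_ij|_{B₁B₂} |Ψ_ij⟩⟨Ψ_ij|_{A₁A₂} M]. -/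
def swapNum (i j : Fin 2)
    (M : Matrix ((Fin 2 × Fin 2) × (Fin 2 × Fin 2)) ((Fin 2 × Fin 2) × (Fin 2 × Fin 2)) ℂ) : ℂ :=
  braket2 (bell i j) (swapProj (bell i j) M) (bell i j)

/-- The postselected end-to-end fidelity F'_ij. -/
def swapFid (i j : Fin 2)
    (M : Matrix ((Fin 2 × Fin 2) × (Fin 2 × Fin 2)) ((Fin 2 × Fin 2) × (Fin 2 × Fin 2)) ℂ) : ℂ :=
  swapNum i j M / swapProb i j M

/-- The family S_{p,F}: two-qubit states of the form p|Ψ₀₀⟩⟨Ψ₀₀| + (1−p)σ for some density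
matrix σ, with fidelity ⟨Ψ₀₀|ρ|Ψ₀₀⟩ = F. -/
def Spf (p F : ℝ) : Set (Matrix (Fin 2 × Fin 2) (Fin 2 × Fin 2) ℂ) :=
  {ρ | (∃ σ : Matrix (Fin 2 × Fin 2) (Fin 2 × Fin 2) ℂ, IsDensity σ ∧
      ρ = (p : ℂ) • bproj 0 0 + ((1 - p : ℝ) : ℂ) • σ) ∧
    braket2 (bell 0 0) ρ (bell 0 0) = (F : ℂ)}

/-!
Put `U = Z^j X^i`, so that `|Ψ_ij⟩ = (1 ⊗ U†)|Ψ₀₀⟩`. Writing the partial inner product on the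
middle registers as `K† M K` with `K = |ψ⟩_{A₁A₂} ⊗ 1_{B₁B₂}`, projecting `A₁A₂` onto
`(1 ⊗ U†)|Ψ₀₀⟩` amounts to conjugating `ρ₂` by `U` on `A₂` and projecting onto `|Ψ₀₀⟩`, while a
further conjugation by `U` on the outer register `B₂` just rotates the resulting operator on
`B₁B₂` by the unitary `1 ⊗ U`. That rotation preserves the trace (the outcome probability) and
turns `⟨Ψ₀₀|·|Ψ₀₀⟩` into `⟨Ψ_ij|·|Ψ_ij⟩`, so `F'_ij(ρ₁ ⊗ ρ₂) = F'₀₀(ρ₁ ⊗ (U ⊗ U) ρ₂ (U ⊗ U)†)`.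
Finally `U` is real orthogonal, so by the flip-flop trick `U ⊗ U` fixes `|Ψ₀₀⟩` and hence
preserves `S_{p,F}`.
-/

local notation "𝟙₂" => (1 : Matrix (Fin 2) (Fin 2) ℂ)
local notation "𝟙₄" => (1 : Matrix (Fin 2 × Fin 2) (Fin 2 × Fin 2) ℂ)

lemma PX_mul_self : PX * PX = 1 := by
  ext a b; fin_cases a <;> fin_cases b <;> simp [PX]

lemma PZ_mul_self : PZ * PZ = 1 := by
  ext a b; fin_cases a <;> fin_cases b <;> simp [PZ]

lemma PX_transpose : PXᵀ = PX := by
  ext a b; fin_cases a <;> fin_cases b <;> simp [PX]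

lemma PZ_transpose : PZᵀ = PZ := by
  ext a b; fin_cases a <;> fin_cases b <;> simp [PZ]

lemma PX_conjTranspose : PXᴴ = PX := by
  ext a b; fin_cases a <;> fin_cases b <;> simp [PX]

lemma PZ_conjTranspose : PZᴴ = PZ := by
  ext a b; fin_cases a <;> fin_cases b <;> simp [PZ]

lemma PZ_pow_mul_PX_pow_mul_transpose (i j : Fin 2) :
    (PZ ^ (j : ℕ) * PX ^ (i : ℕ)) * (PZ ^ (j : ℕ) * PX ^ (i : ℕ))ᵀ = 1 := by
  rw [transpose_mul, transpose_pow, transpose_pow, PX_transpose, PZ_transpose, mul_assoc,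
    ← mul_assoc (PX ^ _), pow_mul_pow_eq_one _ PX_mul_self, one_mul,
    pow_mul_pow_eq_one _ PZ_mul_self]

lemma PZ_pow_mul_PX_pow_conjTranspose (i j : Fin 2) :
    (PZ ^ (j : ℕ) * PX ^ (i : ℕ))ᴴ = PX ^ (i : ℕ) * PZ ^ (j : ℕ) := by
  rw [conjTranspose_mul, conjTranspose_pow, conjTranspose_pow, PX_conjTranspose,
    PZ_conjTranspose]

lemma PZ_pow_mul_PX_pow_conjTranspose_mul_self (i j : Fin 2) :
    (PZ ^ (j : ℕ) * PX ^ (i : ℕ))ᴴ * (PZ ^ (j : ℕ) * PX ^ (i : ℕ)) = 1 := by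
  rw [PZ_pow_mul_PX_pow_conjTranspose, mul_assoc, ← mul_assoc (PZ ^ _),
    pow_mul_pow_eq_one _ PZ_mul_self, one_mul, pow_mul_pow_eq_one _ PX_mul_self]

lemma kronecker_eq_one_kronecker_mul_kronecker_one {α m n : Type*} [CommSemiring α]
    [Fintype m] [Fintype n] [DecidableEq m] [DecidableEq n] (A : Matrix m m α)
    (B : Matrix n n α) :
    A ⊗ₖ B = (1 ⊗ₖ B) * (A ⊗ₖ 1) := by
  rw [← mul_kronecker_mul, one_mul, mul_one]

lemma bell_zero_zero : bell 0 0 = bell00 := by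
  simp [bell]

/-- The flip-flop trick. -/
lemma kronecker_one_mulVec_bell00 (M : Matrix (Fin 2) (Fin 2) ℂ) :
    (M ⊗ₖ 1) *ᵥ bell00 = (1 ⊗ₖ Mᵀ) *ᵥ bell00 := by
  ext ⟨a, b⟩
  simp [bell00, mulVec, dotProduct, Fintype.sum_prod_type, kroneckerMap_apply, one_apply]

lemma kronecker_self_mulVec_bell00 {U : Matrix (Fin 2) (Fin 2) ℂ} (hU : U * Uᵀ = 1) :
    (U ⊗ₖ U) *ᵥ bell00 = bell00 := by
  rw [kronecker_eq_one_kronecker_mul_kronecker_one, ← mulVec_mulVec,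
    kronecker_one_mulVec_bell00, mulVec_mulVec, ← mul_kronecker_mul, one_mul, hU,
    one_kronecker_one, one_mulVec]

lemma braket2_mul_mul_conjTranspose {n : Type*} [Fintype n] (φ ψ : n → ℂ) (W P : Matrix n n ℂ) :
    braket2 φ (W * P * Wᴴ) ψ = braket2 (Wᴴ *ᵥ φ) P (Wᴴ *ᵥ ψ) := by
  rw [braket2, braket2, ← mulVec_mulVec, ← mulVec_mulVec, dotProduct_mulVec, star_mulVec,
    conjTranspose_conjTranspose]

lemma mul_vecMulVec_star_mul_conjTranspose {R n : Type*} [Semiring R] [StarRing R] [Fintype n]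
    (W : Matrix n n R) (v : n → R) :
    W * vecMulVec v (star v) * Wᴴ = vecMulVec (W *ᵥ v) (star (W *ᵥ v)) := by
  rw [mul_vecMulVec, vecMulVec_mul, star_mulVec]

lemma mul_mul_conjTranspose_mem_Spf {C : Matrix (Fin 2 × Fin 2) (Fin 2 × Fin 2) ℂ}
    (hCu : Cᴴ * C = 1) (hCb : C *ᵥ bell 0 0 = bell 0 0) {p F : ℝ}
    {ρ : Matrix (Fin 2 × Fin 2) (Fin 2 × Fin 2) ℂ} (hρ : ρ ∈ Spf p F) :
    C * ρ * Cᴴ ∈ Spf p F := by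
  obtain ⟨⟨σ, ⟨hσ, hσtr⟩, rfl⟩, hfid⟩ := hρ
  have hCb' : Cᴴ *ᵥ bell 0 0 = bell 0 0 := by
    conv_lhs => rw [← hCb]
    rw [mulVec_mulVec, hCu, one_mulVec]
  have hproj : C * bproj 0 0 * Cᴴ = bproj 0 0 := by
    rw [bproj, mul_vecMulVec_star_mul_conjTranspose, hCb]
  refine ⟨⟨C * σ * Cᴴ, ⟨hσ.mul_mul_conjTranspose_same C, ?_⟩, ?_⟩, ?_⟩
  · rw [trace_mul_cycle, hCu, one_mul, hσtr]
  · rw [Matrix.mul_add, Matrix.add_mul, Matrix.mul_smul, Matrix.smul_mul, Matrix.mul_smul,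
      Matrix.smul_mul, hproj]
  · rw [braket2_mul_mul_conjTranspose, hCb', hfid]

/-- The isometry `|ψ⟩_{A₁A₂} ⊗ 1_{B₁B₂}`, with rows in the register order `((B₁, A₁), (A₂, B₂))`
of `swapProj` and columns `(B₁, B₂)`. -/
def middleKet (ψ : Fin 2 × Fin 2 → ℂ) :
    Matrix ((Fin 2 × Fin 2) × (Fin 2 × Fin 2)) (Fin 2 × Fin 2) ℂ :=
  fun x p => if x.1.1 = p.1 ∧ x.2.2 = p.2 then ψ (x.1.2, x.2.1) else 0

lemma swapProj_eq_middleKet (ψ : Fin 2 × Fin 2 → ℂ)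
    (M : Matrix ((Fin 2 × Fin 2) × (Fin 2 × Fin 2)) ((Fin 2 × Fin 2) × (Fin 2 × Fin 2)) ℂ) :
    swapProj ψ M = (middleKet ψ)ᴴ * M * middleKet ψ := by
  ext p q
  simp only [swapProj, middleKet, mul_apply, conjTranspose_apply, Fintype.sum_prod_type, ite_and,
    apply_ite star, star_zero, ite_mul, zero_mul, mul_ite, mul_zero, Finset.sum_ite_eq',
    Finset.mem_univ, if_true, Finset.sum_mul, Finset.sum_ite_irrel, Finset.sum_const_zero]
  conv_lhs => enter [2, a₁]; rw [Finset.sum_comm]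
  conv_lhs => enter [2, a₁, 2, a₁']; rw [Finset.sum_comm]
  conv_lhs => rw [Finset.sum_comm]; enter [2, a₁']; rw [Finset.sum_comm]

lemma middleKet_one_kronecker_mulVec (B : Matrix (Fin 2) (Fin 2) ℂ) (ψ : Fin 2 × Fin 2 → ℂ) :
    middleKet ((𝟙₂ ⊗ₖ B) *ᵥ ψ) = (𝟙₄ ⊗ₖ (B ⊗ₖ 𝟙₂)) * middleKet ψ := by
  ext ⟨⟨b₁, a₁⟩, ⟨a₂, b₂⟩⟩ ⟨p₁, p₂⟩
  simp only [middleKet, mul_apply, mulVec, dotProduct, Fintype.sum_prod_type, kroneckerMap_apply,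
    one_apply, ite_and, Prod.mk.injEq, ite_mul, zero_mul, mul_ite, mul_zero, one_mul,
    Finset.sum_ite_eq', Finset.sum_ite_eq, Finset.mem_univ, if_true, Finset.sum_ite_irrel,
    Finset.sum_const_zero]
  simp only [mul_one, ← ite_and]
  exact if_congr and_comm rfl rfl

lemma one_kronecker_one_kronecker_mul_middleKet (V : Matrix (Fin 2) (Fin 2) ℂ)
    (ψ : Fin 2 × Fin 2 → ℂ) :
    (𝟙₄ ⊗ₖ (𝟙₂ ⊗ₖ V)) * middleKet ψ = middleKet ψ * (𝟙₂ ⊗ₖ V) := by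
  ext ⟨⟨b₁, a₁⟩, ⟨a₂, b₂⟩⟩ ⟨p₁, p₂⟩
  simp only [middleKet, mul_apply, Fintype.sum_prod_type, kroneckerMap_apply, one_apply, ite_and,
    Prod.mk.injEq, ite_mul, zero_mul, mul_ite, mul_zero, one_mul, Finset.sum_ite_eq',
    Finset.sum_ite_eq, Finset.mem_univ, if_true, Finset.sum_ite_irrel, Finset.sum_const_zero]
  rw [mul_comm]

lemma swapProj_one_kronecker_mulVec (B : Matrix (Fin 2) (Fin 2) ℂ) (ψ : Fin 2 × Fin 2 → ℂ)
    (M : Matrix ((Fin 2 × Fin 2) × (Fin 2 × Fin 2)) ((Fin 2 × Fin 2) × (Fin 2 × Fin 2)) ℂ) :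
    swapProj ((𝟙₂ ⊗ₖ B) *ᵥ ψ) M =
      swapProj ψ ((𝟙₄ ⊗ₖ (B ⊗ₖ 1))ᴴ * M * (𝟙₄ ⊗ₖ (B ⊗ₖ 1))) := by
  simp only [swapProj_eq_middleKet, middleKet_one_kronecker_mulVec, conjTranspose_mul,
    Matrix.mul_assoc]

lemma swapProj_one_kronecker_one_kronecker_conj (V : Matrix (Fin 2) (Fin 2) ℂ)
    (ψ : Fin 2 × Fin 2 → ℂ)
    (M : Matrix ((Fin 2 × Fin 2) × (Fin 2 × Fin 2)) ((Fin 2 × Fin 2) × (Fin 2 × Fin 2)) ℂ) :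
    swapProj ψ ((𝟙₄ ⊗ₖ (1 ⊗ₖ V)) * M * (𝟙₄ ⊗ₖ (1 ⊗ₖ V))ᴴ) =
      (1 ⊗ₖ V) * swapProj ψ M * (1 ⊗ₖ V)ᴴ := by
  have h := one_kronecker_one_kronecker_mul_middleKet Vᴴ ψ
  have hstar := congrArg conjTranspose h
  simp only [conjTranspose_mul, conjTranspose_kronecker, conjTranspose_one,
    conjTranspose_conjTranspose] at h hstar
  simp only [swapProj_eq_middleKet, conjTranspose_kronecker, conjTranspose_one, Matrix.mul_assoc, h]
  simp only [← Matrix.mul_assoc, hstar]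

lemma swapProj_kronecker_conj {U : Matrix (Fin 2) (Fin 2) ℂ} (φ : Fin 2 × Fin 2 → ℂ)
    (ρ₁ ρ₂ : Matrix (Fin 2 × Fin 2) (Fin 2 × Fin 2) ℂ) :
    swapProj φ (ρ₁ ⊗ₖ ((U ⊗ₖ U) * ρ₂ * (U ⊗ₖ U)ᴴ)) =
      (1 ⊗ₖ U) * swapProj ((1 ⊗ₖ Uᴴ) *ᵥ φ) (ρ₁ ⊗ₖ ρ₂) * (1 ⊗ₖ U)ᴴ := by
  set τ := (U ⊗ₖ 1) * ρ₂ * (U ⊗ₖ 1)ᴴ with hτ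
  have hsplit : ρ₁ ⊗ₖ ((U ⊗ₖ U) * ρ₂ * (U ⊗ₖ U)ᴴ) =
      (𝟙₄ ⊗ₖ (1 ⊗ₖ U)) * (ρ₁ ⊗ₖ τ) * (𝟙₄ ⊗ₖ (1 ⊗ₖ U))ᴴ := by
    rw [conjTranspose_kronecker 𝟙₄, conjTranspose_one, ← mul_kronecker_mul, one_mul,
      ← mul_kronecker_mul, mul_one, kronecker_eq_one_kronecker_mul_kronecker_one U U]
    simp only [hτ, conjTranspose_mul, Matrix.mul_assoc]
  have hmid : (𝟙₄ ⊗ₖ (Uᴴ ⊗ₖ 1))ᴴ * (ρ₁ ⊗ₖ ρ₂) * (𝟙₄ ⊗ₖ (Uᴴ ⊗ₖ 1)) = ρ₁ ⊗ₖ τ := by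
    rw [conjTranspose_kronecker 𝟙₄, conjTranspose_one, ← mul_kronecker_mul, one_mul,
      ← mul_kronecker_mul, mul_one]
    simp only [hτ, conjTranspose_kronecker, conjTranspose_one, conjTranspose_conjTranspose]
  rw [hsplit, swapProj_one_kronecker_one_kronecker_conj, swapProj_one_kronecker_mulVec, hmid]

lemma swapFid_kronecker_conj {U : Matrix (Fin 2) (Fin 2) ℂ} (hU : Uᴴ * U = 1) {i j : Fin 2}
    (hbell : bell i j = (𝟙₂ ⊗ₖ Uᴴ) *ᵥ bell 0 0)
    (ρ₁ ρ₂ : Matrix (Fin 2 × Fin 2) (Fin 2 × Fin 2) ℂ) :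
    swapFid i j (ρ₁ ⊗ₖ ρ₂) = swapFid 0 0 (ρ₁ ⊗ₖ ((U ⊗ₖ U) * ρ₂ * (U ⊗ₖ U)ᴴ)) := by
  have hW : (𝟙₂ ⊗ₖ U)ᴴ * (1 ⊗ₖ U) = 1 := by
    rw [conjTranspose_kronecker, conjTranspose_one, ← mul_kronecker_mul, one_mul, hU,
      one_kronecker_one]
  have hW' : (𝟙₂ ⊗ₖ U)ᴴ = 1 ⊗ₖ Uᴴ := by
    rw [conjTranspose_kronecker, conjTranspose_one]
  rw [swapFid, swapFid, swapNum, swapNum, swapProb, swapProb, swapProj_kronecker_conj, ← hbell,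
    trace_mul_cycle, hW, Matrix.one_mul, braket2_mul_mul_conjTranspose, hW', ← hbell]

/-- Measurement-outcome independence: for any Bell outcome (i,j) and
ρ₁ ∈ S_{p₁,F₁}, ρ₂ ∈ S_{p₂,F₂}, the state ω₂ = (Z^jX^i ⊗ Z^jX^i) ρ₂ (X^iZ^j ⊗ X^iZ^j)
lies in S_{p₂,F₂} and F'_ij(ρ₁⊗ρ₂) = F'₀₀(ρ₁⊗ω₂); in particular such ω₁, ω₂ exist. -/
theorem swap_fid_outcome_independent (p₁ F₁ p₂ F₂ : ℝ) (i j : Fin 2)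
    (ρ₁ ρ₂ : Matrix (Fin 2 × Fin 2) (Fin 2 × Fin 2) ℂ)
    (hρ₁ : ρ₁ ∈ Spf p₁ F₁) (hρ₂ : ρ₂ ∈ Spf p₂ F₂)
    (C : Matrix (Fin 2 × Fin 2) (Fin 2 × Fin 2) ℂ)
    (hC : C = (PZ ^ (j : ℕ) * PX ^ (i : ℕ)) ⊗ₖ (PZ ^ (j : ℕ) * PX ^ (i : ℕ))) :
    (C * ρ₂ * Cᴴ ∈ Spf p₂ F₂ ∧
      swapFid i j (ρ₁ ⊗ₖ ρ₂) = swapFid 0 0 (ρ₁ ⊗ₖ (C * ρ₂ * Cᴴ))) ∧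
    ∃ ω₁ ∈ Spf p₁ F₁, ∃ ω₂ ∈ Spf p₂ F₂,
      swapFid i j (ρ₁ ⊗ₖ ρ₂) = swapFid 0 0 (ω₁ ⊗ₖ ω₂) := by
  have hCu : Cᴴ * C = 1 := by
    rw [hC, conjTranspose_kronecker, ← mul_kronecker_mul,
      PZ_pow_mul_PX_pow_conjTranspose_mul_self, one_kronecker_one]
  have hCbell : C *ᵥ bell 0 0 = bell 0 0 := by
    rw [hC, bell_zero_zero, kronecker_self_mulVec_bell00 (PZ_pow_mul_PX_pow_mul_transpose i j)]
  have hbell : bell i j = (𝟙₂ ⊗ₖ (PZ ^ (j : ℕ) * PX ^ (i : ℕ))ᴴ) *ᵥ bell 0 0 := by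
    rw [PZ_pow_mul_PX_pow_conjTranspose, bell_zero_zero, bell]
  have hmem : C * ρ₂ * Cᴴ ∈ Spf p₂ F₂ := mul_mul_conjTranspose_mem_Spf hCu hCbell hρ₂
  have hfid : swapFid i j (ρ₁ ⊗ₖ ρ₂) = swapFid 0 0 (ρ₁ ⊗ₖ (C * ρ₂ * Cᴴ)) := by
    rw [hC]
    exact swapFid_kronecker_conj (PZ_pow_mul_PX_pow_conjTranspose_mul_self i j) hbell ρ₁ ρ₂
  exact ⟨⟨hmem, hfid⟩, ρ₁, hρ₁, _, hmem, hfid⟩
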